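/- For a strictly increasing sequence α = (α_1 < ... < α_n) of naturals, let Δ_0(α) be the n×n matrix whose j-th column has i-th entry binom(α_j, i-1) · x^{(α_j - i + 1)} (interpreted as 0 when α_j - i + 1 < 0 or i - 1 > α_j), with x^{(l)} formal variables. Then the diagonal product, namely c · x^{(α_1)} x^{(α_2 - 1)} ⋯ x^{(α_n - n + 1)} with c = Π_j binom(α_j, j-1) ≠ 0, is the smallest monomial (for the order x ≺ x' ≺ x'' ≺ ...) appearing with nonzero coefficient in det(Δ_0(α)). -/

import Mathlib

/-!
Expanding the determinant over permutations, the term of `σ` is a constant times the monomial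
`∏ⱼ x^{(α_j - σ j)}`. The identity contributes the diagonal monomial `D`. For `σ ≠ 1`, let `k` be
the largest index moved by `σ`; then `σ k < k`, and since `α_j - j` is nondecreasing, the largest
exponent `v` among `α_j - σ j` (`j ≤ k`) exceeds every `α_j - j` with `j ≤ k`. Above `k` the two
monomials agree, so they agree in all variables `x^{(w)}` with `w > v` and the monomial of `σ` has
more factors `x^{(v)}`: it is strictly larger than `D`. Hence `D` is reached only by the identity,
with coefficient `∏ⱼ binom(α_j, j) ≠ 0`, and every other monomial of the determinant is larger.
-/

/-- `MinLT m m'` : the monomial `m` is strictly smaller than `m'` in the total order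
on monomials of ℂ[x^{(0)}, x^{(1)}, ...] comparing the highest derivatives first. -/
def MinLT (m m' : ℕ →₀ ℕ) : Prop := ∃ v, m v < m' v ∧ ∀ w, v < w → m w = m' w

open MvPolynomial Finset

lemma MinLT.ne {m m' : ℕ →₀ ℕ} (h : MinLT m m') : m ≠ m' := by
  rintro rfl
  obtain ⟨v, hv, -⟩ := h
  exact lt_irrefl _ hv

lemma StrictMono.apply_add_sub_le {n : ℕ} {α : Fin n → ℕ} (hα : StrictMono α) {j k : Fin n}
    (hjk : j ≤ k) : α j + (k - j : ℕ) ≤ α k := by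
  have h := Finset.card_le_card_of_injOn α (s := Icc j k) (t := Icc (α j) (α k))
    (fun i hi => by
      simp only [coe_Icc, Set.mem_Icc] at hi ⊢
      exact ⟨hα.monotone hi.1, hα.monotone hi.2⟩) hα.injective.injOn
  simp only [Fin.card_Icc, Nat.card_Icc] at h
  have : (j : ℕ) ≤ k := hjk
  omega

lemma StrictMono.val_le_apply {n : ℕ} {α : Fin n → ℕ} (hα : StrictMono α) (k : Fin n) :
    (k : ℕ) ≤ α k :=
  (Nat.le_add_left _ _).trans <| by
    simpa using hα.apply_add_sub_le (j := ⟨0, k.pos⟩) (k := k) (Nat.zero_le _)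

lemma Finsupp.sum_single_one_apply {ι : Type*} [Fintype ι] (f : ι → ℕ) (w : ℕ) :
    (∑ j, Finsupp.single (f j) 1) w = #{j | f j = w} := by
  simp [Finsupp.finsetSum_apply, Finsupp.single_apply, Finset.sum_boole]

lemma minLT_sum_single {ι : Type*} [Fintype ι] {f g : ι → ℕ} {S : Set ι} {i : ι} (hi : i ∈ S)
    (hf : ∀ j ∈ S, f j < g i) (hg : ∀ j ∈ S, g j ≤ g i) (hfg : ∀ j ∉ S, f j = g j) :
    MinLT (∑ j, Finsupp.single (f j) 1) (∑ j, Finsupp.single (g j) 1) := by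
  refine ⟨g i, ?_, fun w hw => ?_⟩
  · simp only [Finsupp.sum_single_one_apply]
    refine Finset.card_lt_card ⟨fun j hj => ?_, fun h => ?_⟩
    · simp only [mem_filter, mem_univ, true_and] at hj ⊢
      by_cases hjS : j ∈ S
      · exact absurd hj (hf j hjS).ne
      · rw [← hfg j hjS, hj]
    · simpa using (hf i hi).ne (by simpa using h (by simp : i ∈ _))
  · simp only [Finsupp.sum_single_one_apply]
    congr 1
    refine Finset.filter_congr fun j _ => ?_
    by_cases hjS : j ∈ S
    · have := hf j hjS; have := hg j hjS; omega
    · rw [hfg j hjS]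

lemma Equiv.Perm.exists_apply_lt_of_ne_one {ι : Type*} [Fintype ι] [LinearOrder ι]
    {σ : Equiv.Perm ι} (hσ : σ ≠ 1) : ∃ k, σ k < k ∧ ∀ j, k < j → σ j = j := by
  have hne : σ.support.Nonempty := nonempty_iff_ne_empty.2 (mt support_eq_empty_iff.1 hσ)
  set k := σ.support.max' hne
  have hfix : ∀ j, k < j → σ j = j := fun j hj =>
    notMem_support.1 fun h => not_lt_of_ge (σ.support.le_max' j h) hj
  refine ⟨k, lt_of_le_of_ne ?_ (mem_support.1 (σ.support.max'_mem hne)), hfix⟩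
  exact σ.support.le_max' _ (apply_mem_support.2 (σ.support.max'_mem hne))

section
variable {n : ℕ} (α : Fin n → ℕ)

-- Δ_0(α) with rows indexed from 0: entry `(i, j)` is `binom(α_j, i) x^{(α_j - i)}`; where the
-- truncated subtraction `α_j - i` is junk, i.e. `i > α_j`, the binomial coefficient vanishes.
noncomputable def binomDerivMatrix : Matrix (Fin n) (Fin n) (MvPolynomial ℕ ℂ) :=
  fun i j => C ((α j).choose i : ℂ) * X (α j - i)

noncomputable def permMonomial (σ : Equiv.Perm (Fin n)) : ℕ →₀ ℕ :=
  ∑ j, Finsupp.single (α j - σ j) 1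

def permCoeff (σ : Equiv.Perm (Fin n)) : ℂ :=
  ∏ j, ((α j).choose (σ j) : ℂ)

lemma det_binomDerivMatrix :
    (binomDerivMatrix α).det
      = ∑ σ, monomial (permMonomial α σ) (Equiv.Perm.sign σ * permCoeff α σ) := by
  refine (Matrix.det_apply _).trans (sum_congr rfl fun σ _ => ?_)
  simp only [binomDerivMatrix, X, C_mul_monomial, mul_one, ← monomial_sum_prod, Units.smul_def,
    ← Int.cast_smul_eq_zsmul ℂ, smul_monomial, smul_eq_mul]
  rfl

lemma coeff_det_binomDerivMatrix (m : ℕ →₀ ℕ) :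
    coeff m (binomDerivMatrix α).det
      = ∑ σ, if permMonomial α σ = m then Equiv.Perm.sign σ * permCoeff α σ else 0 := by
  simp only [det_binomDerivMatrix, coeff_sum, coeff_monomial]

variable {α}

lemma minLT_permMonomial_one (hα : StrictMono α) {σ : Equiv.Perm (Fin n)} (hσ : σ ≠ 1) :
    MinLT (permMonomial α 1) (permMonomial α σ) := by
  obtain ⟨k, hσk, hfix⟩ := Equiv.Perm.exists_apply_lt_of_ne_one hσ
  obtain ⟨i, hi, hmax⟩ := exists_max_image {j | j ≤ k} (fun j => α j - σ j) ⟨k, by simp⟩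
  simp only [mem_filter, mem_univ, true_and] at hi hmax
  refine minLT_sum_single (S := {j | j ≤ k}) hi (fun j hj => ?_) hmax (fun j hj => ?_)
  -- `α_j - j ≤ α_k - k < α_k - σ k ≤ α_i - σ i` for `j ≤ k`
  · have hjk := hα.apply_add_sub_le hj
    have hk := hα.val_le_apply k
    have hki : α k - σ k ≤ α i - σ i := hmax k le_rfl
    have hσk' : (σ k : ℕ) < k := hσk
    have hj' : (j : ℕ) ≤ k := hj
    simp only [Equiv.Perm.one_apply]
    omega
  · simp [hfix j (not_le.1 hj)]

end

/-- for a strictly increasing α, the diagonal product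
`(∏ binom(α_j, j-1)) x^{(α_1)} x^{(α_2 - 1)} ⋯ x^{(α_n - n + 1)}` (0-indexed here)
is the smallest monomial with nonzero coefficient of det Δ_0(α), where Δ_0(α) has
(i,j) entry binom(α_j, i-1) x^{(α_j - i + 1)}. Here x^{(l)} is the variable `X l`. -/
theorem stmt_4 (n : ℕ) (α : Fin n → ℕ) (hα : StrictMono α) :
    let Δ : Matrix (Fin n) (Fin n) (MvPolynomial ℕ ℂ) :=
      fun i j => MvPolynomial.C ((α j).choose (i : ℕ) : ℂ)
        * MvPolynomial.X (α j - (i : ℕ))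
    let D : ℕ →₀ ℕ := ∑ j : Fin n, Finsupp.single (α j - (j : ℕ)) 1
    MvPolynomial.coeff D Δ.det = ∏ j : Fin n, ((α j).choose (j : ℕ) : ℂ) ∧
    (∏ j : Fin n, ((α j).choose (j : ℕ) : ℂ)) ≠ 0 ∧
    ∀ m ∈ Δ.det.support, m ≠ D → MinLT D m := by
  intro Δ D
  have hD : D = permMonomial α 1 := by simp [D, permMonomial]
  have hcoeff (m) : coeff m Δ.det = _ := coeff_det_binomDerivMatrix α m
  refine ⟨?_, ?_, fun m hm hmD => ?_⟩
  · rw [hD, hcoeff, sum_eq_single 1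
      (fun σ _ hσ => if_neg (MinLT.ne (minLT_permMonomial_one hα hσ)).symm)
      (fun h => absurd (mem_univ 1) h)]
    simp [permCoeff]
  · exact prod_ne_zero_iff.2 fun j _ => Nat.cast_ne_zero.2 (Nat.choose_pos (hα.val_le_apply j)).ne'
  · obtain ⟨σ, -, hσ⟩ := exists_ne_zero_of_sum_ne_zero (hcoeff m ▸ mem_support_iff.1 hm)
    have hσm : permMonomial α σ = m := by
      by_contra h
      simp [h] at hσ
    subst hσm
    rw [hD] at hmD ⊢
    exact minLT_permMonomial_one hα fun h => hmD (h ▸ rfl)
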